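/- arXiv:2603.21469 — 3 statements merged into one kernel-verified Lean document; each statement's English description precedes it below -/
import Mathlib

section
/- Let h := δ/(1 + e^ε), let τ := q_h be the absolute value of the h-quantile of Lap(Δ/ε), and let η ~ Lap(Δ/ε). For every v ∈ ℝ, the total variation distance between the distribution of max(v, v + τ + η) and the distribution of v + τ + η is at most δ/(1 + e^ε). -/
/-! When `η > -τ` (with `τ ≥ 0`), `max v (v + τ + η) = v + τ + η`, so the two laws can differ
only on the event `η ≤ -τ`. The Laplace tail is `P(η ≤ -τ) = exp (-τ / b) / 2`, and `τ` is
chosen exactly so that this equals `h`. -/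

open MeasureTheory Real

/-- The Laplace distribution on ℝ with location 0 and scale `b`. -/
noncomputable def laplace (b : ℝ) : Measure ℝ :=
  volume.withDensity fun x => ENNReal.ofReal ((2 * b)⁻¹ * Real.exp (-|x| / b))

open Set

theorem abs_measureReal_sub_le_of_diff_eq {α : Type*} [MeasurableSpace α] {μ : Measure α}
    {s t u : Set α} (hu : MeasurableSet u) (hμu : μ u ≠ ⊤) (hst : s \ u = t \ u) :
    |μ.real s - μ.real t| ≤ μ.real u := by
  have hsplit (r : Set α) : μ r = μ (r ∩ u) + μ (r \ u) := (measure_inter_add_sdiff r hu).symm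
  have hfin (r : Set α) : μ (r ∩ u) ≠ ⊤ := measure_ne_top_of_subset inter_subset_right hμu
  have hle (r : Set α) : μ.real (r ∩ u) ≤ μ.real u := measureReal_mono inter_subset_right hμu
  by_cases hout : μ (s \ u) = ⊤
  · have hs : μ s = ⊤ := by rw [hsplit s, hout, add_top]
    have ht : μ t = ⊤ := by rw [hsplit t, ← hst, hout, add_top]
    simp [measureReal_def, hs, ht]
  · have hreal (r : Set α) (hr : μ (r \ u) ≠ ⊤) : μ.real r = μ.real (r ∩ u) + μ.real (r \ u) := by
      rw [measureReal_def, hsplit r, ENNReal.toReal_add (hfin r) hr, measureReal_def,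
        measureReal_def]
    rw [hreal s hout, hreal t (hst ▸ hout), hst, add_sub_add_right_eq_sub]
    exact abs_sub_le_of_nonneg_of_le measureReal_nonneg (hle s) measureReal_nonneg (hle t)

theorem laplace_Iic {b c : ℝ} (hb : 0 < b) (hc : c ≤ 0) :
    laplace b (Iic c) = ENNReal.ofReal (exp (c / b) / 2) := by
  have hb' : 0 < b⁻¹ := inv_pos.2 hb
  rw [laplace, withDensity_apply _ measurableSet_Iic,
    setLIntegral_congr_fun measurableSet_Iic (g := fun x => ENNReal.ofReal ((2 * b)⁻¹ *
      exp (b⁻¹ * x))) fun x hx => by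
        rw [abs_of_nonpos (le_trans hx hc), neg_neg, div_eq_inv_mul],
    ← ofReal_integral_eq_lintegral_ofReal ((integrableOn_exp_mul_Iic hb' c).const_mul _)
      (ae_of_all _ fun x => by positivity),
    integral_const_mul, integral_exp_mul_Iic hb' c]
  congr 1
  field_simp

theorem laplace_Iic_neg_mul_log {b p : ℝ} (hb : 0 < b) (hp : 0 < p) (hp2 : p ≤ 1 / 2) :
    laplace b (Iic (-(b * log (1 / (2 * p))))) = ENNReal.ofReal p := by
  have hlog : 0 ≤ log (1 / (2 * p)) := log_nonneg (by rw [le_div_iff₀ (by positivity)]; linarith)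
  rw [laplace_Iic hb (neg_nonpos.2 (mul_nonneg hb.le hlog)), neg_div,
    mul_div_cancel_left₀ _ hb.ne', one_div, log_inv, neg_neg, exp_log (by positivity)]
  ring_nf

/-- With `h := δ/(1+e^ε)`, `τ := q_h = (Δ/ε)·ln(1/(2h))` and `η ~ Lap(Δ/ε)`, for every `v` the
total variation distance between the law of `max v (v + τ + η)` and the law of `v + τ + η`
is at most `δ/(1+e^ε)`: every measurable set witnesses a gap of at most `δ/(1+e^ε)`. -/
theorem stmt_2 (ε δ Δ : ℝ) (hε : 0 < ε) (hδ : δ ∈ Set.Ioo (0 : ℝ) 1) (hΔ : 0 < Δ)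
    (h τ : ℝ) (hh : h = δ / (1 + Real.exp ε))
    (hτ : τ = (Δ / ε) * Real.log (1 / (2 * h))) :
    ∀ v : ℝ, ∀ S : Set ℝ, MeasurableSet S →
      |(laplace (Δ / ε) {η : ℝ | max v (v + τ + η) ∈ S}).toReal -
        (laplace (Δ / ε) {η : ℝ | v + τ + η ∈ S}).toReal| ≤ δ / (1 + Real.exp ε) := by
  intro v S _
  obtain ⟨hδ0, hδ1⟩ := hδ
  have hh0 : 0 < h := by rw [hh]; positivity
  have hh2 : h ≤ 1 / 2 := by
    rw [hh, div_le_iff₀ (by positivity)]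
    linarith [one_le_exp hε.le]
  have htail := laplace_Iic_neg_mul_log (div_pos hΔ hε) hh0 hh2
  rw [← hτ] at htail
  have hagree : {η : ℝ | max v (v + τ + η) ∈ S} \ Set.Iic (-τ) =
      {η : ℝ | v + τ + η ∈ S} \ Set.Iic (-τ) := by
    ext η
    simp only [Set.mem_sdiff, Set.mem_ofPred_eq, Set.mem_Iic, not_le, and_congr_left_iff]
    intro hη
    rw [max_eq_right (by linarith)]
  calc _ ≤ (laplace (Δ / ε) (Set.Iic (-τ))).toReal :=
        abs_measureReal_sub_le_of_diff_eq measurableSet_Iic (by simp [htail]) hagree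
    _ = δ / (1 + Real.exp ε) := by rw [htail, ENNReal.toReal_ofReal hh0.le, hh]
end

section
/- Let τ := Δ + q_δ, where q_δ is the absolute value of the δ-quantile of Lap(Δ/ε), let M denote the PositiveLaplaceMechanism with parameters ε, τ and sensitivity Δ, let v ∈ ℝ and v' = v + Δ. Then for every measurable set S ⊂ ℝ, P(M(v') ∈ S ∩ [v, v + Δ]) ≤ δ. -/
open MeasureTheory Real

/-- On input `v`, the PositiveLaplaceMechanism samples `η ~ Lap(Δ/ε)` and outputs
`max v (v + τ + η)`; so `P(M(v) ∈ S)` is the Laplace measure of the preimage. -/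
noncomputable def posLapProb (ε τ Δ : ℝ) (v : ℝ) (S : Set ℝ) : ENNReal :=
  laplace (Δ / ε) {η : ℝ | max v (v + τ + η) ∈ S}

/-! An output of `M(v + Δ)` in `[v, v + Δ]` forces the noise below `-τ`, and the mass of
`Lap(Δ/ε)` below `-τ = -Δ - q_δ` is `e^{-ε} δ ≤ δ`. -/

theorem laplace_Iic_of_nonpos {b : ℝ} (hb : 0 < b) {a : ℝ} (ha : a ≤ 0) :
    laplace b (Set.Iic a) = ENNReal.ofReal (Real.exp (a / b) / 2) := by
  have hdensity : ∀ x ∈ Set.Iic a, ENNReal.ofReal ((2 * b)⁻¹ * Real.exp (-|x| / b))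
      = ENNReal.ofReal ((2 * b)⁻¹ * Real.exp (b⁻¹ * x)) := by
    intro x hx
    rw [abs_of_nonpos (le_trans hx ha), neg_neg, div_eq_inv_mul]
  rw [laplace, withDensity_apply _ measurableSet_Iic,
    setLIntegral_congr_fun measurableSet_Iic hdensity,
    ← ofReal_integral_eq_lintegral_ofReal
      ((integrableOn_exp_mul_Iic (inv_pos.2 hb) a).const_mul _)
      (Filter.Eventually.of_forall fun x => by positivity),
    integral_const_mul, integral_exp_mul_Iic (inv_pos.2 hb)]
  congr 1
  field_simp

-- `-b · log (1 / (2δ))` is the `δ`-quantile of `Lap(b)`.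
theorem laplace_Iic_le_of_le_neg_quantile {b δ a : ℝ} (hb : 0 < b) (hδ : 0 < δ) (ha : a ≤ 0)
    (haq : a ≤ -(b * Real.log (1 / (2 * δ)))) :
    laplace b (Set.Iic a) ≤ ENNReal.ofReal δ := by
  rw [laplace_Iic_of_nonpos hb ha]
  refine ENNReal.ofReal_le_ofReal ?_
  calc Real.exp (a / b) / 2
      ≤ Real.exp (-Real.log (1 / (2 * δ))) / 2 := by
        gcongr
        rwa [div_le_iff₀ hb, neg_mul, mul_comm]
    _ = δ := by
        rw [Real.exp_neg, Real.exp_log (by positivity)]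
        field_simp

theorem posLapProb_le_laplace_Iic {ε τ Δ v u : ℝ} {T : Set ℝ} (hT : T ⊆ Set.Iic u) :
    posLapProb ε τ Δ v T ≤ laplace (Δ / ε) (Set.Iic (u - v - τ)) := by
  refine measure_mono fun η hη => ?_
  have hle : max v (v + τ + η) ≤ u := hT hη
  simp only [Set.mem_Iic]
  linarith [le_max_right v (v + τ + η)]

/-- With `τ := Δ + q_δ` where `q_δ = (Δ/ε)·ln(1/(2δ))` is the absolute value of the
`δ`-quantile of `Lap(Δ/ε)`, for `v' = v + Δ` and every measurable `S`,
`P(M(v') ∈ S ∩ [v, v + Δ]) ≤ δ`. -/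
theorem stmt_6 (ε δ Δ : ℝ) (hε : 0 < ε) (hδ : δ ∈ Set.Ioo (0 : ℝ) (1 / 2)) (hΔ : 0 < Δ)
    (τ : ℝ) (hτ : τ = Δ + (Δ / ε) * Real.log (1 / (2 * δ)))
    (v v' : ℝ) (hv' : v' = v + Δ) :
    ∀ S : Set ℝ, MeasurableSet S →
      posLapProb ε τ Δ v' (S ∩ Set.Icc v (v + Δ)) ≤ ENNReal.ofReal δ := by
  intro S _
  obtain ⟨hδ0, hδ2⟩ := hδ
  have hb : 0 < Δ / ε := div_pos hΔ hε
  have hq : 0 < Δ / ε * Real.log (1 / (2 * δ)) :=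
    mul_pos hb (Real.log_pos (by rw [lt_div_iff₀ (by positivity)]; linarith))
  calc posLapProb ε τ Δ v' (S ∩ Set.Icc v (v + Δ))
      ≤ laplace (Δ / ε) (Set.Iic (v + Δ - v' - τ)) :=
        posLapProb_le_laplace_Iic (Set.inter_subset_right.trans Set.Icc_subset_Iic_self)
    _ ≤ ENNReal.ofReal δ :=
        laplace_Iic_le_of_le_neg_quantile hb hδ0 (by linarith) (by linarith)
end

section
/- Let q be the (1 − δ/(2(1+e^ε)))-quantile of Lap(2/ε), let γ, ν be independent Lap(2/ε) random variables, and set T̂ := T + γ − 2q. If t is an index with f_t(D) ≥ T, then P( f_t(D) + ν < T̂ ) ≤ δ/(1 + e^ε). In particular, the probability that the mechanism which halts at the first i with f_i(D) + ν_i ≥ T̂ (with independent ν_i ~ Lap(2/ε)) fails to have halted by step t is at most δ/(1 + e^ε). -/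
/-!
If the noisy threshold `T + γ - 2q` exceeds the noisy query `f_t(D) + ν`, then `γ > q` or
`ν < -q`: otherwise `f_t(D) + ν ≥ T - q ≥ T + γ - 2q`. By the choice of `q` and the symmetry of
the Laplace distribution each of these events has probability `δ / (2(1 + e^ε))`, and a union
bound gives the first claim. The mechanism not having halted by step `t` entails in particular
`f_t(D) + ν_t < T̂`, which reduces the second claim to the first.
-/

open MeasureTheory Real

instance (b : ℝ) : SigmaFinite (laplace b) := by
  unfold laplace; infer_instance

open Set

lemma integral_exp_neg_abs_div {b : ℝ} (hb : 0 < b) : ∫ x, exp (-|x| / b) = 2 * b := by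
  have h := integral_exp_mul_Ioi (neg_lt_zero.mpr (inv_pos.mpr hb)) 0
  simp only [mul_zero, exp_zero, neg_div_neg_eq, one_div, inv_inv] at h
  rw [integral_comp_abs (f := fun y => exp (-y / b))]
  simp_rw [neg_div, div_eq_inv_mul, ← neg_mul]
  rw [h]

lemma isProbabilityMeasure_laplace {b : ℝ} (hb : 0 < b) : IsProbabilityMeasure (laplace b) := by
  have hint : Integrable (fun x => (2 * b)⁻¹ * exp (-|x| / b)) := by
    refine Integrable.of_integral_ne_zero ?_
    rw [integral_const_mul, integral_exp_neg_abs_div hb]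
    positivity
  constructor
  rw [laplace, withDensity_apply _ MeasurableSet.univ, Measure.restrict_univ,
    ← ofReal_integral_eq_lintegral_ofReal hint (ae_of_all _ fun x => by positivity),
    integral_const_mul, integral_exp_neg_abs_div hb, inv_mul_cancel₀ (by positivity),
    ENNReal.ofReal_one]

instance (b : ℝ) : (laplace b).IsNegInvariant := by
  refine ⟨Measure.ext fun s hs => ?_⟩
  have hdensity : Measurable fun x : ℝ => ENNReal.ofReal ((2 * b)⁻¹ * exp (-|x| / b)) := by
    fun_prop
  rw [Measure.neg_apply, laplace, withDensity_apply _ hs.neg, withDensity_apply _ hs,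
    ← (Measure.measurePreserving_neg volume).setLIntegral_comp_preimage hs hdensity]
  simp only [abs_neg]
  rfl

lemma one_sub_ofReal_one_sub_le (a : ℝ) : 1 - ENNReal.ofReal (1 - a) ≤ ENNReal.ofReal a := by
  rw [tsub_le_iff_right, ← ENNReal.ofReal_one]
  calc ENNReal.ofReal 1 = ENNReal.ofReal (a + (1 - a)) := by ring_nf
    _ ≤ _ := ENNReal.ofReal_add_le

lemma measure_Ioi_add_measure_Iio_neg_le {μ : Measure ℝ} [IsProbabilityMeasure μ]
    [μ.IsNegInvariant] {q a : ℝ} (hq : μ (Iic q) = ENNReal.ofReal (1 - a)) :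
    μ (Ioi q) + μ (Iio (-q)) ≤ ENNReal.ofReal (2 * a) := by
  have hIoi : μ (Ioi q) ≤ ENNReal.ofReal a := by
    rw [← compl_Iic, prob_compl_eq_one_sub measurableSet_Iic, hq]
    exact one_sub_ofReal_one_sub_le a
  rw [← neg_Ioi, Measure.measure_neg, ← two_mul, ENNReal.ofReal_mul zero_le_two,
    ENNReal.ofReal_ofNat]
  gcongr

lemma prod_setOf_add_lt_sub_le (μ ν : Measure ℝ) [IsProbabilityMeasure μ]
    [IsProbabilityMeasure ν] {x T : ℝ} (hx : T ≤ x) (q : ℝ) :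
    μ.prod ν {p | x + p.2 < T + p.1 - 2 * q} ≤ μ (Ioi q) + ν (Iio (-q)) := by
  have hsub : {p : ℝ × ℝ | x + p.2 < T + p.1 - 2 * q} ⊆ Ioi q ×ˢ univ ∪ univ ×ˢ Iio (-q) := by
    intro p hp
    by_contra! h
    simp only [mem_union, mem_prod, mem_Ioi, mem_Iio, mem_univ, and_true, true_and,
      not_or, not_lt] at h
    simp only [mem_ofPred_eq] at hp
    linarith
  calc μ.prod ν _ ≤ μ.prod ν (Ioi q ×ˢ univ ∪ univ ×ˢ Iio (-q)) := measure_mono hsub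
    _ ≤ μ.prod ν (Ioi q ×ˢ univ) + μ.prod ν (univ ×ˢ Iio (-q)) := measure_union_le _ _
    _ = μ (Ioi q) + ν (Iio (-q)) := by
      rw [Measure.prod_prod, Measure.prod_prod, measure_univ, measure_univ, mul_one, one_mul]

lemma prod_pi_preimage_eval_le {α β ι : Type*} [MeasurableSpace α] [MeasurableSpace β]
    [Fintype ι] (μ : Measure α) (ν : Measure β) [SFinite μ] [IsProbabilityMeasure ν] (j : ι)
    (s : Set (α × β)) :
    μ.prod (Measure.pi fun _ : ι => ν) (Prod.map id (Function.eval j) ⁻¹' s) ≤ μ.prod ν s := by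
  have h := (MeasurePreserving.id μ).prod (measurePreserving_eval (fun _ : ι => ν) j)
  rw [← h.map_eq]
  exact Measure.le_map_apply h.measurable.aemeasurable s

-- `f i` stands for `f_i(D)`, and the coordinate `i : Fin t` of `p.2` is the noise `ν_(i+1)`.
theorem stmt_12_general (ε δ T : ℝ) (hε : 0 < ε)
    (q : ℝ)
    (hq : laplace (2 / ε) (Set.Iic q) =
      ENNReal.ofReal (1 - δ / (2 * (1 + Real.exp ε))))
    (f : ℕ → ℝ) (t : ℕ) (ht : 1 ≤ t) (hft : T ≤ f t) :
    (laplace (2 / ε)).prod (laplace (2 / ε))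
        {p : ℝ × ℝ | f t + p.2 < T + p.1 - 2 * q} ≤
      ENNReal.ofReal (δ / (1 + Real.exp ε)) ∧
    (laplace (2 / ε)).prod (Measure.pi fun _ : Fin t => laplace (2 / ε))
        {p : ℝ × (Fin t → ℝ) | ∀ i : Fin t, f ((i : ℕ) + 1) + p.2 i < T + p.1 - 2 * q} ≤
      ENNReal.ofReal (δ / (1 + Real.exp ε)) := by
  have := isProbabilityMeasure_laplace (b := 2 / ε) (by positivity)
  have htail : laplace (2 / ε) (Ioi q) + laplace (2 / ε) (Iio (-q)) ≤
      ENNReal.ofReal (δ / (1 + exp ε)) := by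
    convert measure_Ioi_add_measure_Iio_neg_le hq using 2
    field_simp
  have hlast : (laplace (2 / ε)).prod (laplace (2 / ε))
      {p : ℝ × ℝ | f t + p.2 < T + p.1 - 2 * q} ≤ ENNReal.ofReal (δ / (1 + exp ε)) :=
    (prod_setOf_add_lt_sub_le _ _ hft q).trans htail
  refine ⟨hlast, le_trans (measure_mono fun p hp => ?_)
    ((prod_pi_preimage_eval_le _ _ ⟨t - 1, by omega⟩ _).trans hlast)⟩
  simpa [Nat.sub_add_cancel ht] using hp ⟨t - 1, by omega⟩

/-- Let `q` be the `(1 − δ/(2(1+e^ε)))`-quantile of `Lap(2/ε)`, let `γ, ν` (and `ν_i`) be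
independent `Lap(2/ε)` samples, and `T̂ := T + γ − 2q`.  If `f_t(D) ≥ T` (here `f i`
denotes `f_i(D)` for the fixed dataset `D`) then `P(f_t(D) + ν < T̂) ≤ δ/(1+e^ε)`; in
particular the probability that the mechanism halting at the first `i` with
`f_i(D) + ν_i ≥ T̂` has not halted by step `t` is at most `δ/(1+e^ε)`.  In the first
event the sample is `(γ, ν)`; in the second it is `(γ, (ν_1, …, ν_t))`. -/
theorem stmt_12 (ε δ T : ℝ) (hε : 0 < ε) (hδ : δ ∈ Set.Ioo (0 : ℝ) 1)
    (q : ℝ)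
    (hq : laplace (2 / ε) (Set.Iic q) =
      ENNReal.ofReal (1 - δ / (2 * (1 + Real.exp ε))))
    (f : ℕ → ℝ) (t : ℕ) (ht : 1 ≤ t) (hft : T ≤ f t) :
    (laplace (2 / ε)).prod (laplace (2 / ε))
        {p : ℝ × ℝ | f t + p.2 < T + p.1 - 2 * q} ≤
      ENNReal.ofReal (δ / (1 + Real.exp ε)) ∧
    (laplace (2 / ε)).prod (Measure.pi fun _ : Fin t => laplace (2 / ε))
        {p : ℝ × (Fin t → ℝ) | ∀ i : Fin t, f ((i : ℕ) + 1) + p.2 i < T + p.1 - 2 * q} ≤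
      ENNReal.ofReal (δ / (1 + Real.exp ε)) :=
  stmt_12_general ε δ T hε q hq f t ht hft
end
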